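/- Let k ≥ 1 and let f : ℝ^n → ℝ be in W^{k,∞}. Then for 0 ≤ l ≤ k, ‖∇^l f‖_{L^∞} ≤ C ‖f‖_{L^∞}^{1 − l/k} ‖f‖_{W^{k,∞}}^{l/k}, where C depends only on n, k, l. -/

import Mathlib

/-!
Write `a j = sup ‖D^j f‖`. Comparing `f` at `x` and `x + t v` by Taylor's formula with a Lipschitz
first derivative gives `t a (j+1) ≤ 2 a j + a (j+2) t²` for all `t ≥ 0`, and optimising in `t`
yields `a (j+1)² ≤ 8 a j a (j+2)`. As `8 ≤ 3²`, the sequence `j ↦ 3^(j²) a j` is log-convex on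
`[0, k]`, so `a l` lies below the geometric chord through `a 0` and `a k`:
`a l ≤ 3^(l(k-l)) a 0^(1-l/k) a k^(l/k)`.
-/

open Set
open scoped NNReal

section LogConvex

variable {b : ℕ → ℝ} {k : ℕ}

theorem pow_succ_le_mul_pow_of_sq_le_mul (hb : ∀ j, 0 ≤ b j)
    (hconv : ∀ j, j + 2 ≤ k → b (j + 1) ^ 2 ≤ b j * b (j + 2)) {j : ℕ} (hj : j + 1 ≤ k) :
    b j ^ (j + 1) ≤ b 0 * b (j + 1) ^ j := by
  -- multiplicative form of: the slopes `(log b j - log b 0) / j` increase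
  induction j with
  | zero => simp
  | succ j ih =>
    rcases (hb (j + 1)).eq_or_lt with hzero | hpos
    · rw [← hzero, zero_pow (Nat.succ_ne_zero _)]
      exact mul_nonneg (hb 0) (pow_nonneg (hb _) _)
    refine le_of_mul_le_mul_right ?_ (pow_pos hpos j)
    calc b (j + 1) ^ (j + 1 + 1) * b (j + 1) ^ j = (b (j + 1) ^ 2) ^ (j + 1) := by ring
      _ ≤ (b j * b (j + 2)) ^ (j + 1) := by gcongr; exact hconv j hj
      _ = b j ^ (j + 1) * b (j + 2) ^ (j + 1) := mul_pow _ _ _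
      _ ≤ b 0 * b (j + 1) ^ j * b (j + 2) ^ (j + 1) :=
        mul_le_mul_of_nonneg_right (ih (by omega)) (pow_nonneg (hb _) _)
      _ = b 0 * b (j + 1 + 1) ^ (j + 1) * b (j + 1) ^ j := by ring

theorem pow_add_le_mul_pow_of_sq_le_mul (hb : ∀ j, 0 ≤ b j)
    (hconv : ∀ j, j + 2 ≤ k → b (j + 1) ^ 2 ≤ b j * b (j + 2)) {l d : ℕ} (hld : l + d ≤ k) :
    b l ^ (l + d) ≤ b 0 ^ d * b (l + d) ^ l := by
  induction d with
  | zero => simp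
  | succ d ih =>
    set m := l + d with hm
    rcases Nat.eq_zero_or_pos m with hm0 | hm0
    · obtain ⟨rfl, rfl⟩ : l = 0 ∧ d = 0 := by omega
      simp
    have hslope := pow_succ_le_mul_pow_of_sq_le_mul hb hconv (j := m) (by omega)
    rw [← pow_le_pow_iff_left₀ (pow_nonneg (hb l) _)
      (mul_nonneg (pow_nonneg (hb 0) _) (pow_nonneg (hb _) _)) hm0.ne']
    calc (b l ^ (l + (d + 1))) ^ m = (b l ^ m) ^ (m + 1) := by rw [← pow_mul, ← pow_mul, hm]; ring
      _ ≤ (b 0 ^ d * b m ^ l) ^ (m + 1) := pow_le_pow_left₀ (pow_nonneg (hb l) _) (ih (by omega)) _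
      _ = b 0 ^ (d * (m + 1)) * (b m ^ (m + 1)) ^ l := by ring
      _ ≤ b 0 ^ (d * (m + 1)) * (b 0 * b (m + 1) ^ m) ^ l :=
        mul_le_mul_of_nonneg_left (pow_le_pow_left₀ (pow_nonneg (hb m) _) hslope _)
          (pow_nonneg (hb 0) _)
      _ = (b 0 ^ (d + 1) * b (l + (d + 1)) ^ l) ^ m := by
        rw [show l + (d + 1) = m + 1 by omega, hm]; ring

theorem pow_add_le_of_sq_le_sq_mul_mul {a : ℕ → ℝ} {c : ℝ} (hc : 0 < c) (ha : ∀ j, 0 ≤ a j)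
    (hconv : ∀ j, j + 2 ≤ k → a (j + 1) ^ 2 ≤ c ^ 2 * a j * a (j + 2)) {l d : ℕ}
    (hld : l + d ≤ k) :
    a l ^ (l + d) ≤ c ^ (l * d * (l + d)) * a 0 ^ d * a (l + d) ^ l := by
  -- multiplying by `c ^ j ^ 2` absorbs the constant: the rescaled sequence is log-convex
  have key := pow_add_le_mul_pow_of_sq_le_mul (b := fun j => c ^ j ^ 2 * a j)
    (fun j => mul_nonneg (by positivity) (ha j))
    (fun j hj => by
      calc (c ^ (j + 1) ^ 2 * a (j + 1)) ^ 2 = c ^ (2 * (j + 1) ^ 2) * a (j + 1) ^ 2 := by ring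
        _ ≤ c ^ (2 * (j + 1) ^ 2) * (c ^ 2 * a j * a (j + 2)) := by gcongr; exact hconv j hj
        _ = c ^ j ^ 2 * a j * (c ^ (j + 2) ^ 2 * a (j + 2)) := by ring) hld
  refine le_of_mul_le_mul_left ?_ (pow_pos hc (l ^ 2 * (l + d)))
  calc c ^ (l ^ 2 * (l + d)) * a l ^ (l + d) = (c ^ l ^ 2 * a l) ^ (l + d) := by ring
    _ ≤ (c ^ 0 ^ 2 * a 0) ^ d * (c ^ (l + d) ^ 2 * a (l + d)) ^ l := key
    _ = c ^ (l ^ 2 * (l + d)) * (c ^ (l * d * (l + d)) * a 0 ^ d * a (l + d) ^ l) := by ring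

theorem le_mul_rpow_mul_rpow_of_sq_le_sq_mul_mul {a : ℕ → ℝ} {c : ℝ} (hc : 0 < c)
    (ha : ∀ j, 0 ≤ a j) (hconv : ∀ j, j + 2 ≤ k → a (j + 1) ^ 2 ≤ c ^ 2 * a j * a (j + 2))
    {l : ℕ} (hl : l ≤ k) :
    a l ≤ c ^ (l * (k - l)) * a 0 ^ (1 - (l : ℝ) / k) * a k ^ ((l : ℝ) / k) := by
  rcases Nat.eq_zero_or_pos k with rfl | hk
  · obtain rfl : l = 0 := by omega
    simp
  obtain ⟨d, rfl⟩ := Nat.exists_eq_add_of_le hl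
  have hk' : ((l + d : ℕ) : ℝ) ≠ 0 := by positivity
  have hd : (1 - (l : ℝ) / ↑(l + d)) * ↑(l + d) = (d : ℕ) := by field_simp; push_cast; ring
  have hl' : (l : ℝ) / ↑(l + d) * ↑(l + d) = (l : ℕ) := div_mul_cancel₀ _ hk'
  rw [← pow_le_pow_iff_left₀ (ha l) (by have := ha 0; have := ha (l + d); positivity) hk.ne',
    mul_pow, mul_pow, ← Real.rpow_mul_natCast (ha 0), ← Real.rpow_mul_natCast (ha _), hd, hl',
    Real.rpow_natCast, Real.rpow_natCast, ← pow_mul, Nat.add_sub_cancel_left]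
  exact pow_add_le_of_sq_le_sq_mul_mul hc ha hconv le_rfl

end LogConvex

theorem sq_le_of_forall_mul_le_add_mul_sq {x A B : ℝ} (hx : 0 ≤ x) (hB : 0 ≤ B)
    (h : ∀ t, 0 ≤ t → t * x ≤ 2 * A + B * t ^ 2) : x ^ 2 ≤ 8 * A * B := by
  have hA : 0 ≤ A := by linarith [h 0 le_rfl]
  rcases hB.eq_or_lt with rfl | hB
  · obtain rfl : x = 0 := by
      by_contra hx0
      have := h ((2 * A + 1) / x) (by positivity)
      rw [div_mul_cancel₀ _ hx0] at this
      linarith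
    simp
  · have := h (x / (2 * B)) (by positivity)
    field_simp at this
    nlinarith

section Interpolation

variable {E F : Type*} [NormedAddCommGroup E] [NormedSpace ℝ E] [NormedAddCommGroup F]
  [NormedSpace ℝ F]

theorem mul_norm_fderiv_le_of_lipschitzWith {u : E → F} (hu : Differentiable ℝ u) {A : ℝ}
    (hA : ∀ y, ‖u y‖ ≤ A) {K : ℝ≥0} (hK : LipschitzWith K (fderiv ℝ u)) {t : ℝ} (ht : 0 ≤ t)
    (x : E) : t * ‖fderiv ℝ u x‖ ≤ 2 * A + K * t ^ 2 := by
  have hA0 : 0 ≤ A := (norm_nonneg _).trans (hA x)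
  rw [← Real.norm_of_nonneg ht, ← norm_smul, Real.norm_of_nonneg ht]
  refine ContinuousLinearMap.opNorm_le_of_unit_norm (by positivity) fun v hv => ?_
  set y := x + t • v
  have hyx : ‖y - x‖ = t := by simp [y, norm_smul, hv, abs_of_nonneg ht]
  have htaylor : ‖u y - u x - fderiv ℝ u x (y - x)‖ ≤ K * t * ‖y - x‖ := by
    refine (convex_closedBall x t).norm_image_sub_le_of_norm_fderiv_le' (fun z _ => hu z)
      (fun z hz => ?_) (Metric.mem_closedBall_self ht) (by simp [dist_eq_norm, hyx])
    rw [← dist_eq_norm]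
    exact (hK.dist_le_mul z x).trans (by gcongr; exact hz)
  calc ‖(t • fderiv ℝ u x) v‖ = ‖fderiv ℝ u x (y - x)‖ := by simp [y]
    _ ≤ ‖u y - u x‖ + ‖u y - u x - fderiv ℝ u x (y - x)‖ := norm_le_norm_add_norm_sub _ _
    _ ≤ (‖u y‖ + ‖u x‖) + K * t * t := add_le_add (norm_sub_le _ _) (htaylor.trans_eq (by rw [hyx]))
    _ ≤ 2 * A + K * t ^ 2 := by nlinarith [hA y, hA x]

theorem lipschitzWith_fderiv_iteratedFDeriv {f : E → F} {k m : ℕ} (hf : ContDiff ℝ k f)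
    (hm : m + 2 ≤ k) {K : ℝ≥0} (hK : ∀ x, ‖iteratedFDeriv ℝ (m + 2) f x‖ ≤ K) :
    LipschitzWith K (fderiv ℝ (iteratedFDeriv ℝ m f)) := by
  rw [fderiv_iteratedFDeriv]
  have hdiff : Differentiable ℝ (iteratedFDeriv ℝ (m + 1) f) :=
    hf.differentiable_iteratedFDeriv (mod_cast (by omega : m + 1 < k))
  have := lipschitzWith_of_nnnorm_fderiv_le hdiff fun x => by
    rw [← NNReal.coe_le_coe, coe_nnnorm, norm_fderiv_iteratedFDeriv]
    exact hK x
  simpa using (LinearIsometryEquiv.lipschitz _).comp this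

noncomputable def supNormIteratedFDeriv (f : E → F) (i : ℕ) : ℝ := ⨆ x, ‖iteratedFDeriv ℝ i f x‖

theorem supNormIteratedFDeriv_nonneg (f : E → F) (i : ℕ) : 0 ≤ supNormIteratedFDeriv f i :=
  Real.iSup_nonneg fun _ => norm_nonneg _

theorem sq_supNormIteratedFDeriv_succ_le {f : E → F} {k j : ℕ} (hf : ContDiff ℝ k f)
    (hbdd : ∀ i ≤ k, BddAbove (range fun x => ‖iteratedFDeriv ℝ i f x‖)) (hj : j + 2 ≤ k) :
    supNormIteratedFDeriv f (j + 1) ^ 2 ≤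
      8 * supNormIteratedFDeriv f j * supNormIteratedFDeriv f (j + 2) := by
  refine sq_le_of_forall_mul_le_add_mul_sq (supNormIteratedFDeriv_nonneg _ _)
    (supNormIteratedFDeriv_nonneg _ _) fun t ht => ?_
  rw [supNormIteratedFDeriv, Real.mul_iSup_of_nonneg ht]
  refine ciSup_le fun x => ?_
  have hK := lipschitzWith_fderiv_iteratedFDeriv hf hj
    (K := (supNormIteratedFDeriv f (j + 2)).toNNReal) fun x => by
      rw [Real.coe_toNNReal _ (supNormIteratedFDeriv_nonneg _ _)]
      exact le_ciSup (hbdd _ hj) x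
  have := mul_norm_fderiv_le_of_lipschitzWith
    (hf.differentiable_iteratedFDeriv (mod_cast (by omega : j < k)))
    (fun y => le_ciSup (hbdd j (by omega)) y) hK ht x
  rwa [norm_fderiv_iteratedFDeriv, Real.coe_toNNReal _ (supNormIteratedFDeriv_nonneg _ _)] at this

theorem norm_iteratedFDeriv_le_interpolation {f : E → F} {k l : ℕ} (hf : ContDiff ℝ k f)
    (hl : l ≤ k) (hbdd : ∀ i ≤ k, BddAbove (range fun x => ‖iteratedFDeriv ℝ i f x‖))
    {M₀ Mₖ : ℝ} (hM₀ : ∀ x, ‖f x‖ ≤ M₀) (hMₖ : ∀ x, ‖iteratedFDeriv ℝ k f x‖ ≤ Mₖ) (x : E) :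
    ‖iteratedFDeriv ℝ l f x‖ ≤ 3 ^ (l * (k - l)) * M₀ ^ (1 - (l : ℝ) / k) * Mₖ ^ ((l : ℝ) / k) := by
  set a := supNormIteratedFDeriv f
  have ha : ∀ j, 0 ≤ a j := supNormIteratedFDeriv_nonneg f
  have hconv (j : ℕ) (hj : j + 2 ≤ k) : a (j + 1) ^ 2 ≤ 3 ^ 2 * a j * a (j + 2) :=
    (sq_supNormIteratedFDeriv_succ_le hf hbdd hj).trans (by
      have := mul_nonneg (ha j) (ha (j + 2)); nlinarith)
  have ha₀ : a 0 ≤ M₀ := ciSup_le fun y => by rw [norm_iteratedFDeriv_zero]; exact hM₀ y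
  have haₖ : a k ≤ Mₖ := ciSup_le hMₖ
  have hθ : (l : ℝ) / k ≤ 1 := div_le_one_of_le₀ (mod_cast hl) (Nat.cast_nonneg k)
  calc ‖iteratedFDeriv ℝ l f x‖ ≤ a l := le_ciSup (hbdd l hl) x
    _ ≤ 3 ^ (l * (k - l)) * a 0 ^ (1 - (l : ℝ) / k) * a k ^ ((l : ℝ) / k) :=
      le_mul_rpow_mul_rpow_of_sq_le_sq_mul_mul three_pos ha hconv hl
    _ ≤ 3 ^ (l * (k - l)) * M₀ ^ (1 - (l : ℝ) / k) * Mₖ ^ ((l : ℝ) / k) := by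
      have := (ha 0).trans ha₀
      refine mul_le_mul (mul_le_mul_of_nonneg_left ?_ (by positivity)) ?_
        (Real.rpow_nonneg (ha k) _) (by positivity)
      · exact Real.rpow_le_rpow (ha 0) ha₀ (sub_nonneg.2 hθ)
      · exact Real.rpow_le_rpow (ha k) haₖ (by positivity)

end Interpolation

theorem Linfty_interpolation_general (n k l : ℕ) (hl : l ≤ k) :
    ∃ C : ℝ, 0 < C ∧
      ∀ (f : EuclideanSpace ℝ (Fin n) → ℝ) (M0 Mk : ℝ), ContDiff ℝ k f →
        (∀ x, ‖f x‖ ≤ M0) →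
        (∀ i ≤ k, ∀ x, ‖iteratedFDeriv ℝ i f x‖ ≤ Mk) →
        0 ≤ M0 → 0 ≤ Mk →
        ∀ x, ‖iteratedFDeriv ℝ l f x‖ ≤
          C * M0 ^ (1 - (l : ℝ) / k) * Mk ^ ((l : ℝ) / k) := by
  refine ⟨3 ^ (l * (k - l)), by positivity, fun f M0 Mk hf hM0 hMk _ _ x => ?_⟩
  exact norm_iteratedFDeriv_le_interpolation hf hl
    (fun i hi => ⟨Mk, forall_mem_range.2 (hMk i hi)⟩) hM0 (hMk k le_rfl) x

/-- Gagliardo–Nirenberg type interpolation in `L^∞`-based Sobolev spaces: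
for `f ∈ W^{k,∞}` and `0 ≤ l ≤ k`,
`‖∇^l f‖_∞ ≤ C ‖f‖_∞^{1−l/k} ‖f‖_{W^{k,∞}}^{l/k}`, with `C = C(n,k,l)`. -/
theorem Linfty_interpolation (n k l : ℕ) (hk : 1 ≤ k) (hl : l ≤ k) :
    ∃ C : ℝ, 0 < C ∧
      ∀ (f : EuclideanSpace ℝ (Fin n) → ℝ) (M0 Mk : ℝ), ContDiff ℝ k f →
        (∀ x, ‖f x‖ ≤ M0) →
        (∀ i ≤ k, ∀ x, ‖iteratedFDeriv ℝ i f x‖ ≤ Mk) →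
        0 ≤ M0 → 0 ≤ Mk →
        ∀ x, ‖iteratedFDeriv ℝ l f x‖ ≤
          C * M0 ^ (1 - (l : ℝ) / k) * Mk ^ ((l : ℝ) / k) :=
  Linfty_interpolation_general n k l hl
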